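/- arXiv:2412.02579 — 3 statements merged into one kernel-verified Lean document; each statement's English description precedes it below -/
import Mathlib

section
/- For any function X on a factored space with finite value set and any event C, the history of X given C equals the union over all values x of the histories of the indicator events {X = x}: h(X|C) = ⋃_{x ∈ Val(X)} h(1_{X=x} | C). -/
/-- `J` disintegrates `C` if `C = C_J × C_{I∖J}`, i.e. `C` equals the set of `ω`
whose `J`-coordinates agree with some element of `C` and whose `I∖J`-coordinates
agree with some element of `C`. -/
def Disintegrates {I : Type*} {Ω : I → Type*} (J : Set I) (C : Set (∀ i, Ω i)) : Prop :=
  C = {ω | (∃ c ∈ C, ∀ j ∈ J, ω j = c j) ∧ (∃ c ∈ C, ∀ j ∉ J, ω j = c j)}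

/-- `J` generates `X` given `C`: `J` disintegrates `C` and `X` is determined
by the coordinates in `J` on `C`. -/
def Generates {I : Type*} {Ω : I → Type*} {V : Type*} (J : Set I)
    (X : (∀ i, Ω i) → V) (C : Set (∀ i, Ω i)) : Prop :=
  Disintegrates J C ∧ ∀ ω ∈ C, ∀ ω' ∈ C, (∀ j ∈ J, ω j = ω' j) → X ω = X ω'

/-- The history of `X` given `C`: the intersection of all generating sets. -/
def history {I : Type*} {Ω : I → Type*} {V : Type*}
    (X : (∀ i, Ω i) → V) (C : Set (∀ i, Ω i)) : Set I :=
  ⋂₀ {J | Generates J X C}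

/-- The history of an event `A` given `C` is the history of its indicator. -/
def historyE {I : Type*} {Ω : I → Type*} (A C : Set (∀ i, Ω i)) : Set I :=
  history (fun ω => (ω ∈ A)) C

lemma disint_empty {I : Type*} {Ω : I → Type*} (C : Set (∀ i, Ω i)) :
    Disintegrates (∅ : Set I) C := by
  ext ω
  constructor
  · intro hω
    exact ⟨⟨ω, hω, fun j hj => rfl⟩, ⟨ω, hω, fun j _ => rfl⟩⟩
  · rintro ⟨-, ⟨c, hc, hc'⟩⟩
    have : ω = c := funext fun j => hc' j (Set.notMem_empty j)
    rwa [this]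

lemma disint_union {I : Type*} {Ω : I → Type*} {J K : Set I} {C : Set (∀ i, Ω i)}
    (hJ : Disintegrates J C) (hK : Disintegrates K C) :
    Disintegrates (J ∪ K) C := by
  classical
  ext ω
  constructor
  · intro hω
    exact ⟨⟨ω, hω, fun j _ => rfl⟩, ⟨ω, hω, fun j _ => rfl⟩⟩
  · rintro ⟨⟨c, hc, hcJK⟩, ⟨c', hc', hc'JK⟩⟩
    set η : ∀ i, Ω i := fun j => if j ∈ K then c j else c' j with hη
    have hηC : η ∈ C := by
      rw [hK]
      refine ⟨⟨c, hc, fun j hj => by simp [hη, hj]⟩, ⟨c', hc', fun j hj => by simp [hη, hj]⟩⟩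
    rw [hJ]
    refine ⟨⟨c, hc, fun j hj => hcJK j (Or.inl hj)⟩, ⟨η, hηC, fun j hj => ?_⟩⟩
    by_cases hjK : j ∈ K
    · simp [hη, hjK, hcJK j (Or.inr hjK)]
    · simp [hη, hjK, hc'JK j (fun h => h.elim hj hjK)]

lemma disint_biUnion {I : Type*} {Ω : I → Type*} {V : Type*} [DecidableEq V]
    (f : V → Set I) {C : Set (∀ i, Ω i)} (s : Finset V)
    (hf : ∀ x, Disintegrates (f x) C) :
    Disintegrates (⋃ x ∈ s, f x) C := by
  induction s using Finset.induction_on with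
  | empty => simpa using disint_empty C
  | insert _ _ _ ih =>
    rw [Finset.set_biUnion_insert]
    exact disint_union (hf _) ih

theorem history_eq_iUnion_history_events {I : Type*} [Fintype I] {Ω : I → Type*}
    [∀ i, Fintype (Ω i)] [∀ i, Nonempty (Ω i)] {V : Type*} [Fintype V]
    (X : (∀ i, Ω i) → V) (C : Set (∀ i, Ω i)) :
    history X C = ⋃ x : V, historyE (X ⁻¹' {x}) C := by
  classical
  apply Set.Subset.antisymm
  · -- history X C ⊆ ⋃ x, historyE
    intro i hi
    by_contra hiU
    simp only [Set.mem_iUnion, not_exists] at hiU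
    -- for each x, pick a generating set of the indicator not containing i
    have hchoice : ∀ x : V, ∃ J : Set I,
        Generates J (fun ω => (ω ∈ X ⁻¹' {x})) C ∧ i ∉ J := by
      intro x
      by_contra h
      push_neg at h
      exact hiU x (fun J hJ => h J hJ)
    choose f hfgen hfi using hchoice
    set J : Set I := ⋃ x ∈ (Finset.univ : Finset V), f x with hJdef
    have hJgen : Generates J X C := by
      constructor
      · exact disint_biUnion f Finset.univ (fun x => (hfgen x).1)
      · intro ω hω ω' hω' hagree
        have key : ∀ x : V, (ω ∈ X ⁻¹' {x}) = (ω' ∈ X ⁻¹' {x}) := by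
          intro x
          exact (hfgen x).2 ω hω ω' hω' (fun j hj => hagree j
            (Set.mem_biUnion (Finset.mem_univ x) hj))
        have := key (X ω)
        simp only [Set.mem_preimage, Set.mem_singleton_iff, eq_iff_iff] at this
        exact (this.mp trivial).symm
    have : i ∈ J := hi J hJgen
    rcases Set.mem_iUnion.mp this with ⟨x, hx⟩
    simp only [Set.mem_iUnion, Finset.mem_univ] at hx
    rcases hx with ⟨-, hx⟩
    exact hfi x hx
  · -- ⋃ x, historyE ⊆ history X C
    intro i hi
    rcases Set.mem_iUnion.mp hi with ⟨x, hx⟩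
    intro J hJ
    apply hx
    refine ⟨hJ.1, ?_⟩
    intro ω hω ω' hω' hagree
    simp only [Set.mem_preimage, Set.mem_singleton_iff, eq_iff_iff]
    rw [hJ.2 ω hω ω' hω' hagree]
end

section
/- Structural independence satisfies the composition axiom: if X ⊥ Y | W and X ⊥ Z | W (structurally), then X ⊥ (Y,Z) | W (structurally). -/
open Classical in
noncomputable def mix {I : Type*} {Ω : I → Type*} (J : Set I) (a b : ∀ i, Ω i) :
    ∀ i, Ω i := fun i => if i ∈ J then a i else b i

lemma mix_mem {I : Type*} {Ω : I → Type*} {J : Set I} {i : I} (h : i ∈ J)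
    (a b : ∀ i, Ω i) : mix J a b i = a i := by simp [mix, h]

lemma mix_not_mem {I : Type*} {Ω : I → Type*} {J : Set I} {i : I} (h : i ∉ J)
    (a b : ∀ i, Ω i) : mix J a b i = b i := by simp [mix, h]

lemma disintegrates_iff_mix {I : Type*} {Ω : I → Type*} {J : Set I} {C : Set (∀ i, Ω i)} :
    Disintegrates J C ↔ ∀ a ∈ C, ∀ b ∈ C, mix J a b ∈ C := by
  constructor
  · intro h a ha b hb
    rw [h]
    exact ⟨⟨a, ha, fun j hj => mix_mem hj a b⟩, ⟨b, hb, fun j hj => mix_not_mem hj a b⟩⟩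
  · intro h
    ext ω
    constructor
    · intro hω
      exact ⟨⟨ω, hω, fun _ _ => rfl⟩, ⟨ω, hω, fun _ _ => rfl⟩⟩
    · rintro ⟨⟨a, ha, h1⟩, ⟨b, hb, h2⟩⟩
      have : ω = mix J a b := by
        funext i
        by_cases hi : i ∈ J
        · rw [mix_mem hi]; exact h1 i hi
        · rw [mix_not_mem hi]; exact h2 i hi
      rw [this]; exact h a ha b hb

lemma generates_univ {I : Type*} {Ω : I → Type*} {V : Type*}
    (X : (∀ i, Ω i) → V) (C : Set (∀ i, Ω i)) : Generates Set.univ X C := by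
  constructor
  · rw [disintegrates_iff_mix]
    intro a ha b hb
    have : mix Set.univ a b = a := funext fun i => mix_mem (Set.mem_univ i) a b
    rwa [this]
  · intro ω hω ω' hω' h
    have : ω = ω' := funext fun i => h i (Set.mem_univ i)
    rw [this]

lemma generates_inter {I : Type*} {Ω : I → Type*} {V : Type*}
    {X : (∀ i, Ω i) → V} {C : Set (∀ i, Ω i)} {J₁ J₂ : Set I}
    (h1 : Generates J₁ X C) (h2 : Generates J₂ X C) : Generates (J₁ ∩ J₂) X C := by
  have d1 := disintegrates_iff_mix.mp h1.1
  have d2 := disintegrates_iff_mix.mp h2.1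
  constructor
  · rw [disintegrates_iff_mix]
    intro a ha b hb
    have hd : mix J₂ (mix J₁ a b) b ∈ C := d2 _ (d1 a ha b hb) b hb
    have : mix (J₁ ∩ J₂) a b = mix J₂ (mix J₁ a b) b := by
      funext i
      by_cases hi2 : i ∈ J₂
      · rw [mix_mem hi2]
        by_cases hi1 : i ∈ J₁
        · rw [mix_mem hi1, mix_mem (Set.mem_inter hi1 hi2)]
        · rw [mix_not_mem hi1, mix_not_mem (fun h => hi1 h.1)]
      · rw [mix_not_mem hi2, mix_not_mem (fun h => hi2 h.2)]
    rwa [this]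
  · intro ω hω ω' hω' hagree
    have hd : mix J₁ ω ω' ∈ C := d1 ω hω ω' hω'
    have e1 : X (mix J₁ ω ω') = X ω := by
      refine h1.2 _ hd _ hω fun j hj => ?_
      rw [mix_mem hj]
    have e2 : X (mix J₁ ω ω') = X ω' := by
      refine h2.2 _ hd _ hω' fun j hj => ?_
      by_cases hj1 : j ∈ J₁
      · rw [mix_mem hj1]; exact hagree j ⟨hj1, hj⟩
      · rw [mix_not_mem hj1]
    rw [← e1, e2]

lemma generates_history {I : Type*} [Fintype I] {Ω : I → Type*} {V : Type*}
    (X : (∀ i, Ω i) → V) (C : Set (∀ i, Ω i)) : Generates (history X C) X C := by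
  have hfin : {J : Set I | Generates J X C}.Finite := Set.toFinite _
  have key : ∀ S : Set (Set I), S.Finite → (∀ J ∈ S, Generates J X C) →
      Generates (⋂₀ S) X C := by
    intro S hS
    refine Set.Finite.induction_on (motive := fun S _ => (∀ J ∈ S, Generates J X C) → Generates (⋂₀ S) X C) S hS ?_ ?_
    · intro _; simpa using generates_univ X C
    · intro J T _ _ ih hmem
      rw [Set.sInter_insert]
      exact generates_inter (hmem J (Set.mem_insert _ _))
        (ih fun K hK => hmem K (Set.mem_insert_of_mem _ hK))
  exact key _ hfin (fun J hJ => hJ)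

lemma generates_of_superset {I : Type*} [Fintype I] {Ω : I → Type*} {V : Type*}
    {X : (∀ i, Ω i) → V} {C : Set (∀ i, Ω i)} {J : Set I}
    (hJ : Disintegrates J C) (hsub : history X C ⊆ J) : Generates J X C := by
  refine ⟨hJ, fun ω hω ω' hω' hagree => ?_⟩
  exact (generates_history X C).2 ω hω ω' hω' fun j hj => hagree j (hsub hj)

lemma disintegrates_compl {I : Type*} {Ω : I → Type*} {J : Set I} {C : Set (∀ i, Ω i)}
    (h : Disintegrates J C) : Disintegrates Jᶜ C := by
  rw [disintegrates_iff_mix] at h ⊢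
  intro a ha b hb
  have : mix Jᶜ a b = mix J b a := by
    funext i
    by_cases hi : i ∈ J
    · rw [mix_mem hi, mix_not_mem (show i ∉ Jᶜ from fun hc => hc hi)]
    · rw [mix_not_mem hi, mix_mem (show i ∈ Jᶜ from hi)]
  rw [this]; exact h b hb a ha

theorem structural_independence_composition {I : Type*} [Fintype I] {Ω : I → Type*}
    [∀ i, Fintype (Ω i)] [∀ i, Nonempty (Ω i)] {VX VY VZ VW : Type*}
    (X : (∀ i, Ω i) → VX) (Y : (∀ i, Ω i) → VY) (Z : (∀ i, Ω i) → VZ)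
    (W : (∀ i, Ω i) → VW)
    (hXY : ∀ w : VW, Disjoint (history X (W ⁻¹' {w})) (history Y (W ⁻¹' {w})))
    (hXZ : ∀ w : VW, Disjoint (history X (W ⁻¹' {w})) (history Z (W ⁻¹' {w}))) :
    ∀ w : VW, Disjoint (history X (W ⁻¹' {w}))
      (history (fun ω => (Y ω, Z ω)) (W ⁻¹' {w})) := by
  intro w
  set C := W ⁻¹' {w} with hC
  have hdX : Disintegrates (history X C)ᶜ C :=
    disintegrates_compl (generates_history X C).1
  have hYsub : history Y C ⊆ (history X C)ᶜ :=
    (hXY w).symm.subset_compl_right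
  have hZsub : history Z C ⊆ (history X C)ᶜ :=
    (hXZ w).symm.subset_compl_right
  have hgenY : Generates (history X C)ᶜ Y C := generates_of_superset hdX hYsub
  have hgenZ : Generates (history X C)ᶜ Z C := generates_of_superset hdX hZsub
  have hgenYZ : Generates (history X C)ᶜ (fun ω => (Y ω, Z ω)) C := by
    refine ⟨hdX, fun ω hω ω' hω' hagree => ?_⟩
    exact Prod.ext (hgenY.2 ω hω ω' hω' hagree) (hgenZ.2 ω hω ω' hω' hagree)
  have hsub : history (fun ω => (Y ω, Z ω)) C ⊆ (history X C)ᶜ :=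
    Set.sInter_subset_of_mem hgenYZ
  exact Set.disjoint_left.mpr fun i hi hj => (hsub hj) hi
end

section
/- Structural independence of the history split: for events A, C ⊆ Ω with J = h(A|C), the variables U_J and U_{I∖J} are conditionally independent given C under every factorizing distribution P: P(U_J^{-1}(α) ∩ C)·P(U_{I∖J}^{-1}(β) ∩ C) = P(U_J^{-1}(α) ∩ U_{I∖J}^{-1}(β) ∩ C)·P(C) for all α ∈ Ω_J, β ∈ Ω_{I∖J}. -/
/-- A probability distribution on a finite type. -/
def IsDist {α : Type*} [Fintype α] (P : α → ℝ) : Prop :=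
  (∀ a, 0 ≤ P a) ∧ ∑ a, P a = 1

/-- The probability of an event `A` under `P`. -/
noncomputable def pr {α : Type*} [Fintype α] (P : α → ℝ) (A : Set α) : ℝ :=
  ∑ a, A.indicator P a

/-- `P` factorizes over the factored space `∀ i, Ω i`. -/
def Factorizes {I : Type*} [Fintype I] [DecidableEq I] {Ω : I → Type*}
    [∀ i, Fintype (Ω i)] (P : (∀ i, Ω i) → ℝ) : Prop :=
  ∃ p : ∀ i, Ω i → ℝ, (∀ i, IsDist (p i)) ∧ ∀ ω, P ω = ∏ i, p i (ω i)

open Classical in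
/-- The probability of a "rectangular" event under a factorizing distribution
splits as a product. -/
lemma pr_split {I : Type*} [Fintype I] [DecidableEq I] {Ω : I → Type*} [∀ i, Fintype (Ω i)]
    (J : Set I) (p : ∀ i, Ω i → ℝ)
    (e : (∀ j : J, Ω j.1) → Prop) (f : (∀ j : ↥Jᶜ, Ω j.1) → Prop) :
    pr (fun ω : ∀ i, Ω i => ∏ i, p i (ω i))
      {ω : ∀ i, Ω i | e (fun j => ω j.1) ∧ f (fun j => ω j.1)} =
    (∑ x : ∀ j : J, Ω j.1, if e x then ∏ j, p j.1 (x j) else 0) *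
    (∑ y : ∀ j : ↥Jᶜ, Ω j.1, if f y then ∏ j, p j.1 (y j) else 0) := by
  classical
  rw [Finset.sum_mul_sum]
  unfold pr
  rw [← Equiv.sum_comp (Equiv.piEquivPiSubtypeProd (· ∈ J) Ω).symm, Fintype.sum_prod_type]
  refine Finset.sum_congr rfl fun x _ => Finset.sum_congr rfl fun y _ => ?_
  have h1 : (fun j : J => (Equiv.piEquivPiSubtypeProd (· ∈ J) Ω).symm (x, y) j.1) = x := by
    funext j
    simp [Equiv.piEquivPiSubtypeProd, dif_pos j.2]
  have h2 : (fun j : ↥Jᶜ => (Equiv.piEquivPiSubtypeProd (· ∈ J) Ω).symm (x, y) j.1) = y := by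
    funext j
    simp only [Equiv.piEquivPiSubtypeProd, Equiv.coe_fn_symm_mk, dif_neg j.2]
    rfl
  have h3 : ∏ i, p i ((Equiv.piEquivPiSubtypeProd (· ∈ J) Ω).symm (x, y) i)
      = (∏ j : J, p j.1 (x j)) * ∏ j : ↥Jᶜ, p j.1 (y j) := by
    rw [← Fintype.prod_subtype_mul_prod_subtype (· ∈ J)
      (fun i => p i ((Equiv.piEquivPiSubtypeProd (· ∈ J) Ω).symm (x, y) i))]
    congr 1
    · exact Finset.prod_congr rfl fun j _ => by rw [congrFun h1 j]
    · exact Finset.prod_congr rfl fun j _ => by rw [congrFun h2 j]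
  rw [Set.indicator_apply]
  simp only [Set.mem_setOf_eq, h1, h2, h3]
  by_cases he : e x <;> by_cases hf : f y <;> simp [he, hf]

lemma disint_univ {I : Type*} {Ω : I → Type*} (C : Set (∀ i, Ω i)) :
    Disintegrates Set.univ C := by
  ext ω
  constructor
  · intro h; exact ⟨⟨ω, h, fun _ _ => rfl⟩, ⟨ω, h, fun _ _ => rfl⟩⟩
  · rintro ⟨⟨c, hc, hωc⟩, -⟩
    have : ω = c := funext fun j => hωc j (Set.mem_univ j)
    rwa [this]

lemma disint_inter {I : Type*} {Ω : I → Type*} [DecidableEq I] {J K : Set I}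
    {C : Set (∀ i, Ω i)} (hJ : Disintegrates J C) (hK : Disintegrates K C) :
    Disintegrates (J ∩ K) C := by
  classical
  ext ω
  constructor
  · intro h; exact ⟨⟨ω, h, fun _ _ => rfl⟩, ⟨ω, h, fun _ _ => rfl⟩⟩
  · rintro ⟨⟨c₁, hc₁, h₁⟩, ⟨c₂, hc₂, h₂⟩⟩
    set d : ∀ i, Ω i := fun i => if i ∈ K then c₁ i else c₂ i with hd
    have hdC : d ∈ C := by
      rw [hK]
      exact ⟨⟨c₁, hc₁, fun j hj => by simp [hd, if_pos hj]⟩,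
             ⟨c₂, hc₂, fun j hj => by simp [hd, if_neg hj]⟩⟩
    rw [hJ]
    refine ⟨⟨d, hdC, fun j hj => ?_⟩, ⟨c₂, hc₂, fun j hj => h₂ j (fun h => hj h.1)⟩⟩
    by_cases hk : j ∈ K
    · simp only [hd, if_pos hk]; exact h₁ j ⟨hj, hk⟩
    · simp only [hd, if_neg hk]; exact h₂ j (fun h => hk h.2)

lemma disint_sInter {I : Type*} {Ω : I → Type*} [Fintype I] [DecidableEq I]
    {C : Set (∀ i, Ω i)} (S : Set (Set I)) (hS : ∀ J ∈ S, Disintegrates J C) :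
    Disintegrates (⋂₀ S) C := by
  classical
  refine Set.Finite.induction_on
    (motive := fun S _ => (∀ J ∈ S, Disintegrates J C) → Disintegrates (⋂₀ S) C)
    S (Set.toFinite S) ?_ ?_ hS
  · intro _; simpa using disint_univ C
  · intro a s _ _ ih hmem
    rw [Set.sInter_insert]
    exact disint_inter (hmem _ (Set.mem_insert _ _))
      (ih fun J hJ => hmem J (Set.mem_insert_of_mem _ hJ))

lemma disint_historyE {I : Type*} {Ω : I → Type*} [Fintype I] [DecidableEq I]
    (A C : Set (∀ i, Ω i)) : Disintegrates (historyE A C) C :=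
  disint_sInter _ (fun _ hJ => hJ.1)

theorem history_split_independence {I : Type*} [Fintype I] [DecidableEq I]
    {Ω : I → Type*} [∀ i, Fintype (Ω i)] [∀ i, Nonempty (Ω i)]
    (A C : Set (∀ i, Ω i))
    (P : (∀ i, Ω i) → ℝ) (hP : Factorizes P)
    (α : (j : historyE A C) → Ω j.1) (β : (j : ↥(historyE A C)ᶜ) → Ω j.1) :
    pr P ({ω | ∀ j : historyE A C, ω j.1 = α j} ∩ C) *
        pr P ({ω | ∀ j : ↥(historyE A C)ᶜ, ω j.1 = β j} ∩ C)
      = pr P ({ω | ∀ j : historyE A C, ω j.1 = α j} ∩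
          {ω | ∀ j : ↥(historyE A C)ᶜ, ω j.1 = β j} ∩ C) * pr P C := by
  classical
  obtain ⟨p, hp, hPp⟩ := hP
  have hPe : P = fun ω => ∏ i, p i (ω i) := funext hPp
  subst hPe
  have hD : Disintegrates (historyE A C) C := disint_historyE A C
  set e0 : (∀ j : historyE A C, Ω j.1) → Prop :=
    fun x => ∃ c ∈ C, ∀ j : historyE A C, x j = c j.1 with he0
  set f0 : (∀ j : ↥(historyE A C)ᶜ, Ω j.1) → Prop :=
    fun y => ∃ c ∈ C, ∀ j : ↥(historyE A C)ᶜ, y j = c j.1 with hf0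
  set e1 : (∀ j : historyE A C, Ω j.1) → Prop := fun x => (∀ j, x j = α j) ∧ e0 x with he1
  set f1 : (∀ j : ↥(historyE A C)ᶜ, Ω j.1) → Prop := fun y => (∀ j, y j = β j) ∧ f0 y with hf1
  have hC : ∀ ω : ∀ i, Ω i, ω ∈ C ↔
      (e0 (fun j : historyE A C => ω j.1) ∧ f0 (fun j : ↥(historyE A C)ᶜ => ω j.1)) := by
    intro ω
    conv_lhs => rw [hD]
    simp only [Set.mem_setOf_eq, he0, hf0, Subtype.forall, Set.mem_compl_iff]
  have h4 : C = {ω : ∀ i, Ω i | e0 (fun j => ω j.1) ∧ f0 (fun j => ω j.1)} := by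
    ext ω; exact hC ω
  have h1 : ({ω : ∀ i, Ω i | ∀ j : historyE A C, ω j.1 = α j} ∩ C)
      = {ω : ∀ i, Ω i | e1 (fun j => ω j.1) ∧ f0 (fun j => ω j.1)} := by
    ext ω
    simp only [Set.mem_inter_iff, Set.mem_setOf_eq, hC ω, he1]
    tauto
  have h2 : ({ω : ∀ i, Ω i | ∀ j : ↥(historyE A C)ᶜ, ω j.1 = β j} ∩ C)
      = {ω : ∀ i, Ω i | e0 (fun j => ω j.1) ∧ f1 (fun j => ω j.1)} := by
    ext ω
    simp only [Set.mem_inter_iff, Set.mem_setOf_eq, hC ω, hf1]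
    tauto
  have h3 : ({ω : ∀ i, Ω i | ∀ j : historyE A C, ω j.1 = α j} ∩
      {ω : ∀ i, Ω i | ∀ j : ↥(historyE A C)ᶜ, ω j.1 = β j} ∩ C)
      = {ω : ∀ i, Ω i | e1 (fun j => ω j.1) ∧ f1 (fun j => ω j.1)} := by
    ext ω
    simp only [Set.mem_inter_iff, Set.mem_setOf_eq, hC ω, he1, hf1]
    tauto
  have h4' := congrArg (pr (fun ω : ∀ i, Ω i => ∏ i, p i (ω i))) h4
  rw [h1, h2, h3, h4', pr_split, pr_split, pr_split, pr_split]
  ring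
end
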